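/- arXiv:2210.07669 — 5 statements merged into one kernel-verified Lean document; each statement's English description precedes it below -/
import Mathlib

section
/- Let d be a positive integer, θ > 0, ρ > 0, ϱ > 0, and let τ satisfy 1/ϱ ≤ τ ≤ 1/θ. Let K be a nonempty finite index set with convex weights w_n ≥ 0, Σ_{n∈K} w_n = 1. For each n ∈ K, let L_n : ℝ^d → ℝ with gradient map ∇L_n be both θ-smooth and ρ-strongly convex, and let m_n* be a global minimizer of L_n. Let m, m* ∈ ℝ^d and let Γ ≥ 0 satisfy L_n(m*) − L_n(m_n*) ≤ Γ for all n ∈ K. Set ḡ = Σ_{n∈K} w_n ∇L_n(m). Then: τ²·‖ḡ‖₂² − 2τ·⟨m − m*, ḡ⟩ ≤ 2ϱ·τ²·Γ − ρ·τ·‖m − m*‖₂². -/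
open RealInnerProductSpace

/-- Bound on term A+B of the convergence analysis:
`τ²‖ḡ‖² - 2τ⟨m - m*, ḡ⟩ ≤ 2ϱτ²Γ - ρτ‖m - m*‖²`. -/
theorem descent_cross_term_bound (d : ℕ) (hd : 0 < d) (θ ρ ϱ τ : ℝ)
    (hθ : 0 < θ) (hρ : 0 < ρ) (hϱ : 0 < ϱ) (hτ1 : 1 / ϱ ≤ τ) (hτ2 : τ ≤ 1 / θ)
    {ι : Type*} (K : Finset ι) (hK : K.Nonempty)
    (w : ι → ℝ) (hw : ∀ n ∈ K, 0 ≤ w n) (hwsum : ∑ n ∈ K, w n = 1)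
    (L : ι → EuclideanSpace ℝ (Fin d) → ℝ)
    (gL : ι → EuclideanSpace ℝ (Fin d) → EuclideanSpace ℝ (Fin d))
    (hsmooth : ∀ n ∈ K, ∀ x y : EuclideanSpace ℝ (Fin d),
      L n y - L n x ≤ ⟪y - x, gL n x⟫ + θ / 2 * ‖y - x‖ ^ 2)
    (hconv : ∀ n ∈ K, ∀ x y : EuclideanSpace ℝ (Fin d),
      L n y - L n x ≥ ⟪y - x, gL n x⟫ + ρ / 2 * ‖y - x‖ ^ 2)
    (mmin : ι → EuclideanSpace ℝ (Fin d))
    (hmin : ∀ n ∈ K, ∀ x : EuclideanSpace ℝ (Fin d), L n (mmin n) ≤ L n x)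
    (m mstar : EuclideanSpace ℝ (Fin d)) (Γ : ℝ) (hΓ0 : 0 ≤ Γ)
    (hΓ : ∀ n ∈ K, L n mstar - L n (mmin n) ≤ Γ) :
    τ ^ 2 * ‖∑ n ∈ K, w n • gL n m‖ ^ 2 -
        2 * τ * ⟪m - mstar, ∑ n ∈ K, w n • gL n m⟫ ≤
      2 * ϱ * τ ^ 2 * Γ - ρ * τ * ‖m - mstar‖ ^ 2 := by
  have hτpos : 0 < τ := lt_of_lt_of_le (by positivity) hτ1
  have hτθ : τ * θ ≤ 1 := by
    rw [le_div_iff₀ hθ] at hτ2; exact hτ2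
  have hϱτ : 1 ≤ ϱ * τ := by
    rw [div_le_iff₀ hϱ] at hτ1; linarith
  set G : EuclideanSpace ℝ (Fin d) := ∑ n ∈ K, w n • gL n m with hG
  -- inner product with G expands
  have hinner : ∀ x : EuclideanSpace ℝ (Fin d),
      ⟪x, G⟫ = ∑ n ∈ K, w n * ⟪x, gL n m⟫ := by
    intro x
    rw [hG, inner_sum]
    exact Finset.sum_congr rfl fun n _ => real_inner_smul_right x _ (w n)
  -- Jensen: ‖G‖² ≤ Σ wₙ ‖gₙ‖²
  have hJ : ‖G‖ ^ 2 ≤ ∑ n ∈ K, w n * ‖gL n m‖ ^ 2 := by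
    have h0 : 0 ≤ ∑ n ∈ K, w n * ‖gL n m - G‖ ^ 2 :=
      Finset.sum_nonneg fun n hn => mul_nonneg (hw n hn) (by positivity)
    have hexp : ∀ n ∈ K, w n * ‖gL n m - G‖ ^ 2 =
        w n * ‖gL n m‖ ^ 2 - 2 * (w n * ⟪G, gL n m⟫) + w n * ‖G‖ ^ 2 := by
      intro n hn
      have : ‖gL n m - G‖ ^ 2 = ‖gL n m‖ ^ 2 - 2 * ⟪gL n m, G⟫ + ‖G‖ ^ 2 := by
        rw [@norm_sub_sq_real]
      rw [this, real_inner_comm]; ring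
    rw [Finset.sum_congr rfl hexp, Finset.sum_add_distrib, Finset.sum_sub_distrib,
      ← Finset.mul_sum, ← Finset.sum_mul, hwsum, ← hinner G,
      real_inner_self_eq_norm_sq] at h0
    linarith
  -- per-client bound
  have key : ∀ n ∈ K, τ ^ 2 * ‖gL n m‖ ^ 2 - 2 * τ * ⟪m - mstar, gL n m⟫ ≤
      2 * ϱ * τ ^ 2 * Γ - ρ * τ * ‖m - mstar‖ ^ 2 := by
    intro n hn
    -- gradient bound from smoothness at minimizer
    have hgrad : ‖gL n m‖ ^ 2 ≤ 2 * θ * (L n m - L n (mmin n)) := by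
      have h1 := hsmooth n hn m (m - (1 / θ) • gL n m)
      have h2 := hmin n hn (m - (1 / θ) • gL n m)
      have e1 : m - (1 / θ) • gL n m - m = -((1 / θ) • gL n m) := by abel
      rw [e1, inner_neg_left, real_inner_smul_left, real_inner_self_eq_norm_sq,
        norm_neg, norm_smul] at h1
      have e2 : ‖(1 : ℝ) / θ‖ = 1 / θ := by
        rw [Real.norm_eq_abs, abs_of_pos (by positivity)]
      rw [e2] at h1
      have hθ2 : θ / 2 * ((1 / θ * ‖gL n m‖) ^ 2) = 1 / (2 * θ) * ‖gL n m‖ ^ 2 := by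
        field_simp
      rw [hθ2] at h1
      have : L n (mmin n) - L n m ≤ -(1 / θ) * ‖gL n m‖ ^ 2 + 1 / (2 * θ) * ‖gL n m‖ ^ 2 := by
        linarith
      have h3 : -(1 / θ) * ‖gL n m‖ ^ 2 + 1 / (2 * θ) * ‖gL n m‖ ^ 2 =
          -(1 / (2 * θ)) * ‖gL n m‖ ^ 2 := by field_simp; ring
      rw [h3] at this
      have h5 := mul_le_mul_of_nonneg_left this (by positivity : (0:ℝ) ≤ 2 * θ)
      have h6 : 2 * θ * (-(1 / (2 * θ)) * ‖gL n m‖ ^ 2) = -(‖gL n m‖ ^ 2) := by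
        field_simp
      linarith
    -- strong convexity lower bound on inner product
    have hsc : ⟪m - mstar, gL n m⟫ ≥ L n m - L n mstar + ρ / 2 * ‖m - mstar‖ ^ 2 := by
      have h1 := hconv n hn m mstar
      have e1 : ⟪mstar - m, gL n m⟫ = -⟪m - mstar, gL n m⟫ := by
        rw [← inner_neg_left]; congr 1; abel
      have e2 : ‖mstar - m‖ = ‖m - mstar‖ := norm_sub_rev _ _
      rw [e1, e2] at h1
      linarith
    have hmin' : L n (mmin n) ≤ L n m := hmin n hn m
    have hΓn := hΓ n hn
    have hA : τ ^ 2 * ‖gL n m‖ ^ 2 ≤ 2 * τ * (L n m - L n (mmin n)) := by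
      nlinarith [mul_le_mul_of_nonneg_left hgrad (sq_nonneg τ),
        mul_nonneg (mul_nonneg (by linarith : (0:ℝ) ≤ 2 * τ)
          (sub_nonneg.mpr hmin')) (by nlinarith : (0:ℝ) ≤ 1 - τ * θ)]
    have hB := mul_le_mul_of_nonneg_left hsc (by linarith : (0:ℝ) ≤ 2 * τ)
    nlinarith [hA, hB, mul_le_mul_of_nonneg_left hΓn (by linarith : (0:ℝ) ≤ 2 * τ),
      mul_nonneg (mul_nonneg (by linarith : (0:ℝ) ≤ 2 * τ) hΓ0)
        (by linarith : (0:ℝ) ≤ ϱ * τ - 1)]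
  calc τ ^ 2 * ‖G‖ ^ 2 - 2 * τ * ⟪m - mstar, G⟫
      ≤ τ ^ 2 * (∑ n ∈ K, w n * ‖gL n m‖ ^ 2) -
        2 * τ * (∑ n ∈ K, w n * ⟪m - mstar, gL n m⟫) := by
        rw [← hinner]
        have := mul_le_mul_of_nonneg_left hJ (sq_nonneg τ)
        linarith
    _ = ∑ n ∈ K, w n * (τ ^ 2 * ‖gL n m‖ ^ 2 - 2 * τ * ⟪m - mstar, gL n m⟫) := by
        rw [Finset.mul_sum, Finset.mul_sum, ← Finset.sum_sub_distrib]
        exact Finset.sum_congr rfl fun n _ => by ring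
    _ ≤ ∑ n ∈ K, w n * (2 * ϱ * τ ^ 2 * Γ - ρ * τ * ‖m - mstar‖ ^ 2) :=
        Finset.sum_le_sum fun n hn => mul_le_mul_of_nonneg_left (key n hn) (hw n hn)
    _ = 2 * ϱ * τ ^ 2 * Γ - ρ * τ * ‖m - mstar‖ ^ 2 := by
        rw [← Finset.sum_mul, hwsum, one_mul]
end

section
/- Let (Ω, 𝔽, ℙ) be a probability space and d a positive integer. Let K, J be finite index sets with K nonempty, p_n > 0 for n ∈ K, p_n ∈ ℝ for n ∈ J, and set H = Σ_{n∈K} p_n, w_n = p_n/H for n ∈ K. Let θ > 0, ρ > 0, ϱ > 0, τ with 1/ϱ ≤ τ ≤ 1/θ, and G > 0, ϑ ≥ 0, σ_B ≥ 0, N ≥ |J|, Γ ≥ 0. For each n ∈ K, let L_n : ℝ^d → ℝ with gradient map ∇L_n be both θ-smooth and ρ-strongly convex, with global minimizer m_n*, and let m, m* ∈ ℝ^d satisfy L_n(m*) − L_n(m_n*) ≤ Γ for all n ∈ K. Set ḡ = Σ_{n∈K} w_n ∇L_n(m). Let ĝ, r : Ω → ℝ^d be integrable random vectors with integrable squared norms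 such that E[ĝ] = ḡ, E[‖ĝ − ḡ‖₂²] ≤ ϑ², E[r] = 0, E[‖r‖₂²] ≤ N·Σ_{n∈J} p_n² + d·σ_B, and E[⟨ĝ − ḡ, r⟩] = 0. Define the updated model m⁺ = m − τ·(ĝ + (G/H)·r). Then: E[‖m⁺ − m*‖₂²] ≤ (1 − ρτ)·‖m − m*‖₂² + τ²·(2ϱΓ + ϑ² + G²·Ψ), where Ψ = (N·Σ_{n∈J} p_n² + d·σ_B)/H². -/
open MeasureTheory RealInnerProductSpace

/-- One-step contraction bound (Theorem 1): the expected squared distance of the updated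
global model `m⁺ = m - τ(ĝ + (G/H) r)` from the optimum satisfies
`E[‖m⁺ - m*‖²] ≤ (1 - ρτ)‖m - m*‖² + τ²(2ϱΓ + ϑ² + G²Ψ)`. -/
theorem one_step_contraction
    {Ω : Type*} [MeasureSpace Ω] [IsProbabilityMeasure (volume : Measure Ω)]
    (d : ℕ) (hd : 0 < d) {ι : Type*} (K J : Finset ι) (hK : K.Nonempty)
    (p : ι → ℝ) (hpK : ∀ n ∈ K, 0 < p n)
    (H : ℝ) (hH : H = ∑ n ∈ K, p n) (w : ι → ℝ) (hw : ∀ n ∈ K, w n = p n / H)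
    (θ ρ ϱ τ G ϑ σB Γ : ℝ) (N : ℕ)
    (hθ : 0 < θ) (hρ : 0 < ρ) (hϱ : 0 < ϱ) (hτ1 : 1 / ϱ ≤ τ) (hτ2 : τ ≤ 1 / θ)
    (hG : 0 < G) (hϑ : 0 ≤ ϑ) (hσB : 0 ≤ σB) (hΓ : 0 ≤ Γ) (hNJ : J.card ≤ N)
    (L : ι → EuclideanSpace ℝ (Fin d) → ℝ)
    (gL : ι → EuclideanSpace ℝ (Fin d) → EuclideanSpace ℝ (Fin d))
    (hsmooth : ∀ n ∈ K, ∀ x y : EuclideanSpace ℝ (Fin d),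
      L n y - L n x ≤ ⟪y - x, gL n x⟫ + θ / 2 * ‖y - x‖ ^ 2)
    (hconv : ∀ n ∈ K, ∀ x y : EuclideanSpace ℝ (Fin d),
      L n y - L n x ≥ ⟪y - x, gL n x⟫ + ρ / 2 * ‖y - x‖ ^ 2)
    (mmin : ι → EuclideanSpace ℝ (Fin d))
    (hmin : ∀ n ∈ K, ∀ x : EuclideanSpace ℝ (Fin d), L n (mmin n) ≤ L n x)
    (m mstar : EuclideanSpace ℝ (Fin d))
    (hGap : ∀ n ∈ K, L n mstar - L n (mmin n) ≤ Γ)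
    (gbar : EuclideanSpace ℝ (Fin d)) (hgbar : gbar = ∑ n ∈ K, w n • gL n m)
    (ghat r : Ω → EuclideanSpace ℝ (Fin d))
    (hghatint : Integrable ghat) (hrint : Integrable r)
    (hghatsqint : Integrable (fun ω => ‖ghat ω - gbar‖ ^ 2))
    (hrsqint : Integrable (fun ω => ‖r ω‖ ^ 2))
    (hunbiased : (∫ ω, ghat ω) = gbar)
    (hvar : (∫ ω, ‖ghat ω - gbar‖ ^ 2) ≤ ϑ ^ 2)
    (hrmean : (∫ ω, r ω) = 0)
    (hrsq : (∫ ω, ‖r ω‖ ^ 2) ≤ (N : ℝ) * ∑ n ∈ J, (p n) ^ 2 + (d : ℝ) * σB)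
    (hcrossint : Integrable (fun ω => ⟪ghat ω - gbar, r ω⟫))
    (hcross : (∫ ω, ⟪ghat ω - gbar, r ω⟫) = 0)
    (mplus : Ω → EuclideanSpace ℝ (Fin d))
    (hmplus : ∀ ω, mplus ω = m - τ • (ghat ω + (G / H) • r ω))
    (Ψ : ℝ) (hΨ : Ψ = ((N : ℝ) * ∑ n ∈ J, (p n) ^ 2 + (d : ℝ) * σB) / H ^ 2) :
    (∫ ω, ‖mplus ω - mstar‖ ^ 2) ≤
      (1 - ρ * τ) * ‖m - mstar‖ ^ 2 + τ ^ 2 * (2 * ϱ * Γ + ϑ ^ 2 + G ^ 2 * Ψ) := by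
  have hτpos : 0 < τ := lt_of_lt_of_le (by positivity) hτ1
  have hHpos : 0 < H := by
    rw [hH]; exact Finset.sum_pos hpK hK
  have hwpos : ∀ n ∈ K, 0 ≤ w n := fun n hn => by
    rw [hw n hn]; exact le_of_lt (div_pos (hpK n hn) hHpos)
  have hwsum : ∑ n ∈ K, w n = 1 := by
    rw [Finset.sum_congr rfl hw, ← Finset.sum_div, ← hH, div_self hHpos.ne']
  have hτθ : τ * θ ≤ 1 := by
    rw [← le_div_iff₀ hθ] at *; exact hτ2
  have hτϱ : 1 ≤ τ * ϱ := by
    rw [div_le_iff₀ hϱ] at hτ1; linarith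
  have h2τ : (0:ℝ) ≤ 2 * τ := by linarith
  set c : ℝ := G / H with hc
  set v : EuclideanSpace ℝ (Fin d) := m - mstar with hv
  set X : Ω → EuclideanSpace ℝ (Fin d) := fun ω => ghat ω - gbar with hX
  -- integrability facts
  have hXint : Integrable X := hghatint.sub (integrable_const gbar)
  have hXmean : (∫ ω, X ω) = 0 := by
    rw [hX]
    rw [integral_sub hghatint (integrable_const gbar), hunbiased, integral_const]
    simp
  -- pointwise expansion
  have hpt : ∀ ω, ‖mplus ω - mstar‖ ^ 2 =
      ‖v‖ ^ 2 - 2 * τ * ⟪v, gbar⟫ + τ ^ 2 * ‖gbar‖ ^ 2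
      + ((- 2 * τ) * ⟪v, X ω⟫ + (- 2 * τ * c) * ⟪v, r ω⟫
        + (2 * τ ^ 2) * ⟪gbar, X ω⟫ + (2 * τ ^ 2 * c) * ⟪gbar, r ω⟫
        + (2 * τ ^ 2 * c) * ⟪X ω, r ω⟫
        + τ ^ 2 * ‖X ω‖ ^ 2 + (τ ^ 2 * c ^ 2) * ‖r ω‖ ^ 2) := by
    intro ω
    have h1 : mplus ω - mstar = v - τ • (gbar + X ω + c • r ω) := by
      rw [hmplus ω, hv, hX]
      simp only [smul_add, smul_sub]
      abel
    rw [h1, ← real_inner_self_eq_norm_sq, ← real_inner_self_eq_norm_sq v,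
        ← real_inner_self_eq_norm_sq gbar, ← real_inner_self_eq_norm_sq (X ω),
        ← real_inner_self_eq_norm_sq (r ω)]
    simp only [inner_sub_left, inner_sub_right, inner_add_left, inner_add_right,
      inner_smul_left, inner_smul_right, RCLike.conj_to_real]
    rw [real_inner_comm (X ω) v, real_inner_comm (r ω) v, real_inner_comm gbar v,
        real_inner_comm (X ω) gbar, real_inner_comm (r ω) gbar, real_inner_comm (r ω) (X ω)]
    ring
  -- integrability of the sum
  have i1 : Integrable (fun ω => (- 2 * τ) * ⟪v, X ω⟫) := (hXint.const_inner v).const_mul _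
  have i2 : Integrable (fun ω => (- 2 * τ * c) * ⟪v, r ω⟫) := (hrint.const_inner v).const_mul _
  have i3 : Integrable (fun ω => (2 * τ ^ 2) * ⟪gbar, X ω⟫) :=
    (hXint.const_inner gbar).const_mul _
  have i4 : Integrable (fun ω => (2 * τ ^ 2 * c) * ⟪gbar, r ω⟫) :=
    (hrint.const_inner gbar).const_mul _
  have i5 : Integrable (fun ω => (2 * τ ^ 2 * c) * ⟪X ω, r ω⟫) := hcrossint.const_mul _
  have i6 : Integrable (fun ω => τ ^ 2 * ‖X ω‖ ^ 2) := hghatsqint.const_mul _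
  have i7 : Integrable (fun ω => (τ ^ 2 * c ^ 2) * ‖r ω‖ ^ 2) := hrsqint.const_mul _
  have I2 : Integrable (fun ω => (- 2 * τ) * ⟪v, X ω⟫ + (- 2 * τ * c) * ⟪v, r ω⟫) := i1.add i2
  have I3 : Integrable (fun ω => (- 2 * τ) * ⟪v, X ω⟫ + (- 2 * τ * c) * ⟪v, r ω⟫
      + (2 * τ ^ 2) * ⟪gbar, X ω⟫) := I2.add i3
  have I4 : Integrable (fun ω => (- 2 * τ) * ⟪v, X ω⟫ + (- 2 * τ * c) * ⟪v, r ω⟫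
      + (2 * τ ^ 2) * ⟪gbar, X ω⟫ + (2 * τ ^ 2 * c) * ⟪gbar, r ω⟫) := I3.add i4
  have I5 : Integrable (fun ω => (- 2 * τ) * ⟪v, X ω⟫ + (- 2 * τ * c) * ⟪v, r ω⟫
      + (2 * τ ^ 2) * ⟪gbar, X ω⟫ + (2 * τ ^ 2 * c) * ⟪gbar, r ω⟫
      + (2 * τ ^ 2 * c) * ⟪X ω, r ω⟫) := I4.add i5
  have I6 : Integrable (fun ω => (- 2 * τ) * ⟪v, X ω⟫ + (- 2 * τ * c) * ⟪v, r ω⟫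
      + (2 * τ ^ 2) * ⟪gbar, X ω⟫ + (2 * τ ^ 2 * c) * ⟪gbar, r ω⟫
      + (2 * τ ^ 2 * c) * ⟪X ω, r ω⟫ + τ ^ 2 * ‖X ω‖ ^ 2) := I5.add i6
  have I7 : Integrable (fun ω => (- 2 * τ) * ⟪v, X ω⟫ + (- 2 * τ * c) * ⟪v, r ω⟫
      + (2 * τ ^ 2) * ⟪gbar, X ω⟫ + (2 * τ ^ 2 * c) * ⟪gbar, r ω⟫
      + (2 * τ ^ 2 * c) * ⟪X ω, r ω⟫ + τ ^ 2 * ‖X ω‖ ^ 2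
      + (τ ^ 2 * c ^ 2) * ‖r ω‖ ^ 2) := I6.add i7
  -- individual integrals
  have j1 : (∫ ω, (- 2 * τ) * ⟪v, X ω⟫) = 0 := by
    rw [integral_const_mul, integral_inner hXint, hXmean, inner_zero_right, mul_zero]
  have j2 : (∫ ω, (- 2 * τ * c) * ⟪v, r ω⟫) = 0 := by
    rw [integral_const_mul, integral_inner hrint, hrmean, inner_zero_right, mul_zero]
  have j3 : (∫ ω, (2 * τ ^ 2) * ⟪gbar, X ω⟫) = 0 := by
    rw [integral_const_mul, integral_inner hXint, hXmean, inner_zero_right, mul_zero]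
  have j4 : (∫ ω, (2 * τ ^ 2 * c) * ⟪gbar, r ω⟫) = 0 := by
    rw [integral_const_mul, integral_inner hrint, hrmean, inner_zero_right, mul_zero]
  have j5 : (∫ ω, (2 * τ ^ 2 * c) * ⟪X ω, r ω⟫) = 0 := by
    rw [integral_const_mul]
    rw [show (∫ ω, ⟪X ω, r ω⟫) = 0 from hcross, mul_zero]
  have j6 : (∫ ω, τ ^ 2 * ‖X ω‖ ^ 2) = τ ^ 2 * ∫ ω, ‖X ω‖ ^ 2 := integral_const_mul _ _
  have j7 : (∫ ω, (τ ^ 2 * c ^ 2) * ‖r ω‖ ^ 2) = (τ ^ 2 * c ^ 2) * ∫ ω, ‖r ω‖ ^ 2 :=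
    integral_const_mul _ _
  -- compute the integral
  have key : (∫ ω, ‖mplus ω - mstar‖ ^ 2) =
      ‖v‖ ^ 2 - 2 * τ * ⟪v, gbar⟫ + τ ^ 2 * ‖gbar‖ ^ 2
      + (τ ^ 2 * (∫ ω, ‖X ω‖ ^ 2) + (τ ^ 2 * c ^ 2) * (∫ ω, ‖r ω‖ ^ 2)) := by
    rw [integral_congr_ae (Filter.Eventually.of_forall hpt)]
    rw [integral_add (integrable_const _) I7, integral_add I6 i7, integral_add I5 i6,
      integral_add I4 i5, integral_add I3 i4, integral_add I2 i3, integral_add i1 i2,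
      integral_const, j1, j2, j3, j4, j5, j6, j7]
    simp [measure_univ]
  rw [key]
  -- deterministic part
  have hSle : ∀ n ∈ K, ‖gL n m‖ ^ 2 ≤ 2 * θ * (L n m - L n (mmin n)) := by
    intro n hn
    have hs := hsmooth n hn m (m - (1 / θ) • gL n m)
    have h2 : L n (mmin n) ≤ L n (m - (1 / θ) • gL n m) := hmin n hn _
    have h3 : (m - (1 / θ) • gL n m) - m = -((1 / θ) • gL n m) := by abel
    rw [h3] at hs
    have hin : ⟪-((1 / θ) • gL n m), gL n m⟫ = -((1 / θ) * ‖gL n m‖ ^ 2) := by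
      rw [inner_neg_left, real_inner_smul_left, real_inner_self_eq_norm_sq]
    have hnn : ‖-((1 / θ) • gL n m)‖ ^ 2 = (1 / θ) ^ 2 * ‖gL n m‖ ^ 2 := by
      rw [norm_neg, norm_smul, mul_pow, Real.norm_eq_abs,
        abs_of_pos (by positivity : (0:ℝ) < 1 / θ)]
    rw [hin, hnn] at hs
    have hsimp : -((1 / θ) * ‖gL n m‖ ^ 2) + θ / 2 * ((1 / θ) ^ 2 * ‖gL n m‖ ^ 2)
        = -((1 / (2 * θ)) * ‖gL n m‖ ^ 2) := by
      field_simp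
      ring
    rw [hsimp] at hs
    have hstep : (1 / (2 * θ)) * ‖gL n m‖ ^ 2 ≤ L n m - L n (mmin n) := by linarith
    have hmul := mul_le_mul_of_nonneg_left hstep (show (0:ℝ) ≤ 2 * θ by linarith)
    have hcancel : 2 * θ * ((1 / (2 * θ)) * ‖gL n m‖ ^ 2) = ‖gL n m‖ ^ 2 := by
      field_simp
    linarith
  -- inner product lower bound
  have hinner : (∑ n ∈ K, w n * (L n m - L n mstar)) + ρ / 2 * ‖v‖ ^ 2 ≤ ⟪v, gbar⟫ := by
    have hg : ⟪v, gbar⟫ = ∑ n ∈ K, w n * ⟪v, gL n m⟫ := by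
      rw [hgbar, inner_sum]
      exact Finset.sum_congr rfl fun n hn => by rw [real_inner_smul_right]
    have hlhs : (∑ n ∈ K, w n * (L n m - L n mstar)) + ρ / 2 * ‖v‖ ^ 2
        = ∑ n ∈ K, w n * ((L n m - L n mstar) + ρ / 2 * ‖v‖ ^ 2) := by
      simp_rw [mul_add]
      rw [Finset.sum_add_distrib, ← Finset.sum_mul, hwsum, one_mul]
    rw [hg, hlhs]
    refine Finset.sum_le_sum fun n hn => ?_
    refine mul_le_mul_of_nonneg_left ?_ (hwpos n hn)
    have hcv := hconv n hn m mstar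
    have hnorm : ‖mstar - m‖ = ‖v‖ := by rw [hv, ← neg_sub mstar m, norm_neg]
    have hin : ⟪mstar - m, gL n m⟫ = - ⟪v, gL n m⟫ := by
      rw [hv, ← neg_sub m mstar, inner_neg_left]
    rw [hnorm, hin] at hcv
    linarith
  -- norm of gbar bound (Jensen)
  have hnormg : ‖gbar‖ ^ 2 ≤ ∑ n ∈ K, w n * ‖gL n m‖ ^ 2 := by
    have h1 : ‖gbar‖ ≤ ∑ n ∈ K, w n * ‖gL n m‖ := by
      rw [hgbar]
      calc ‖∑ n ∈ K, w n • gL n m‖ ≤ ∑ n ∈ K, ‖w n • gL n m‖ := norm_sum_le _ _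
        _ = ∑ n ∈ K, w n * ‖gL n m‖ := Finset.sum_congr rfl fun n hn => by
            rw [norm_smul, Real.norm_eq_abs, abs_of_nonneg (hwpos n hn)]
    have h2 : (∑ n ∈ K, w n * ‖gL n m‖) ^ 2
        ≤ (∑ n ∈ K, w n) * ∑ n ∈ K, w n * ‖gL n m‖ ^ 2 := by
      refine Finset.sum_sq_le_sum_mul_sum_of_sq_eq_mul K hwpos
        (fun n hn => mul_nonneg (hwpos n hn) (sq_nonneg _)) (fun n hn => by ring)
    calc ‖gbar‖ ^ 2 ≤ (∑ n ∈ K, w n * ‖gL n m‖) ^ 2 := by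
          refine pow_le_pow_left₀ (norm_nonneg _) h1 2
      _ ≤ (∑ n ∈ K, w n) * ∑ n ∈ K, w n * ‖gL n m‖ ^ 2 := h2
      _ = ∑ n ∈ K, w n * ‖gL n m‖ ^ 2 := by rw [hwsum, one_mul]
  set S : ℝ := ∑ n ∈ K, w n * (L n m - L n mstar) with hS
  -- bound on τ² ‖gbar‖²
  have hgb2 : τ ^ 2 * ‖gbar‖ ^ 2 ≤ 2 * τ * S + 2 * τ * Γ := by
    have hA : ∑ n ∈ K, w n * ‖gL n m‖ ^ 2
        ≤ 2 * θ * ∑ n ∈ K, w n * (L n m - L n (mmin n)) := by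
      rw [Finset.mul_sum]
      refine Finset.sum_le_sum fun n hn => ?_
      calc w n * ‖gL n m‖ ^ 2 ≤ w n * (2 * θ * (L n m - L n (mmin n))) :=
            mul_le_mul_of_nonneg_left (hSle n hn) (hwpos n hn)
        _ = 2 * θ * (w n * (L n m - L n (mmin n))) := by ring
    have hAnn : 0 ≤ ∑ n ∈ K, w n * (L n m - L n (mmin n)) :=
      Finset.sum_nonneg fun n hn =>
        mul_nonneg (hwpos n hn) (sub_nonneg.2 (hmin n hn m))
    have hAS : ∑ n ∈ K, w n * (L n m - L n (mmin n)) ≤ S + Γ := by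
      have : ∑ n ∈ K, w n * (L n m - L n (mmin n))
          = S + ∑ n ∈ K, w n * (L n mstar - L n (mmin n)) := by
        rw [hS, ← Finset.sum_add_distrib]
        exact Finset.sum_congr rfl fun n hn => by ring
      rw [this]
      have : ∑ n ∈ K, w n * (L n mstar - L n (mmin n)) ≤ ∑ n ∈ K, w n * Γ := by
        refine Finset.sum_le_sum fun n hn =>
          mul_le_mul_of_nonneg_left (hGap n hn) (hwpos n hn)
      rw [← Finset.sum_mul, hwsum, one_mul] at this
      linarith
    calc τ ^ 2 * ‖gbar‖ ^ 2 ≤ τ ^ 2 * ∑ n ∈ K, w n * ‖gL n m‖ ^ 2 := by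
          exact mul_le_mul_of_nonneg_left hnormg (by positivity)
      _ ≤ τ ^ 2 * (2 * θ * ∑ n ∈ K, w n * (L n m - L n (mmin n))) :=
          mul_le_mul_of_nonneg_left hA (by positivity)
      _ = 2 * τ * ((τ * θ) * ∑ n ∈ K, w n * (L n m - L n (mmin n))) := by ring
      _ ≤ 2 * τ * (1 * ∑ n ∈ K, w n * (L n m - L n (mmin n))) :=
          mul_le_mul_of_nonneg_left (mul_le_mul_of_nonneg_right hτθ hAnn) h2τ
      _ = 2 * τ * ∑ n ∈ K, w n * (L n m - L n (mmin n)) := by ring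
      _ ≤ 2 * τ * (S + Γ) := mul_le_mul_of_nonneg_left hAS h2τ
      _ = 2 * τ * S + 2 * τ * Γ := by ring
  -- assemble
  have f1 : 2 * τ * (S + ρ / 2 * ‖v‖ ^ 2) ≤ 2 * τ * ⟪v, gbar⟫ :=
    mul_le_mul_of_nonneg_left hinner h2τ
  have f3 : 2 * τ * Γ ≤ τ ^ 2 * (2 * ϱ * Γ) := by
    have h0 : (0:ℝ) ≤ 2 * τ * Γ := mul_nonneg h2τ hΓ
    have h := mul_le_mul_of_nonneg_left hτϱ h0
    calc 2 * τ * Γ = 2 * τ * Γ * 1 := by ring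
      _ ≤ 2 * τ * Γ * (τ * ϱ) := h
      _ = τ ^ 2 * (2 * ϱ * Γ) := by ring
  have f4 : τ ^ 2 * (∫ ω, ‖X ω‖ ^ 2) ≤ τ ^ 2 * ϑ ^ 2 :=
    mul_le_mul_of_nonneg_left hvar (by positivity)
  have f5 : (τ ^ 2 * c ^ 2) * (∫ ω, ‖r ω‖ ^ 2) ≤ τ ^ 2 * (G ^ 2 * Ψ) := by
    have : (τ ^ 2 * c ^ 2) * ((N : ℝ) * ∑ n ∈ J, (p n) ^ 2 + (d : ℝ) * σB)
        = τ ^ 2 * (G ^ 2 * Ψ) := by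
      rw [hΨ, hc]; field_simp
    rw [← this]
    exact mul_le_mul_of_nonneg_left hrsq (by positivity)
  have hvnorm : ‖m - mstar‖ = ‖v‖ := rfl
  rw [hvnorm]
  linarith only [f1, f3, f4, f5, hgb2]
end

section
/- Let ρ > 0, λ > 1/ρ, μ ≥ λρ, η ≥ 0, and let Ω : ℕ → ℝ and η̂ : ℕ → ℝ be sequences with Ω(t) ≥ 0 and 0 ≤ η̂(t) ≤ η for all t. Suppose that for all t ≥ 0, with τ(t) = λ/(t + μ): Ω(t+1) ≤ (1 − ρ·τ(t))·Ω(t) + τ(t)²·η̂(t). Then for all t ≥ 0: Ω(t) ≤ χ/(t + μ), where χ = max{ λ²η/(λρ − 1), μ·Ω(0) }. -/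
/-!
With `s = t + μ`, an upper bound `χ / s` on `Ω(t)` propagates through the recursion because
`((s - λρ) χ + λ²η) / s² ≤ (s - 1) χ / s² ≤ χ / (s + 1)`; the first step is exactly the choice
`χ ≥ λ²η / (λρ - 1)`, the second is `s² - 1 ≤ s²`. The base case is the choice `χ ≥ μ Ω(0)`, and
`μ ≥ λρ` keeps the contraction factor `1 - λρ / s` nonnegative.
-/

lemma contraction_step_le {a b s χ : ℝ} (hs : 0 < s) (hχ : 0 ≤ χ) (hb : b ≤ (a - 1) * χ) :
    (1 - a / s) * (χ / s) + b / s ^ 2 ≤ χ / (s + 1) :=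
  calc (1 - a / s) * (χ / s) + b / s ^ 2
      = ((s - a) * χ + b) / s ^ 2 := by field_simp
    _ ≤ (s - 1) * χ / s ^ 2 := by gcongr; linarith
    _ ≤ χ / (s + 1) := by
      rw [div_le_div_iff₀ (by positivity) (by positivity)]
      nlinarith

lemma le_div_add_of_contraction {a b μ χ : ℝ} {u : ℕ → ℝ} (ha : a ≤ μ) (hμ : 0 < μ)
    (hχ : 0 ≤ χ) (hb : b ≤ (a - 1) * χ) (h₀ : μ * u 0 ≤ χ)
    (hu : ∀ t : ℕ, u (t + 1) ≤ (1 - a / (t + μ)) * u t + b / (t + μ) ^ 2) (t : ℕ) :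
    u t ≤ χ / (t + μ) := by
  induction t with
  | zero => rwa [Nat.cast_zero, zero_add, le_div_iff₀ hμ, mul_comm]
  | succ n ih =>
    have hs : 0 < (n : ℝ) + μ := by positivity
    have hfactor : 0 ≤ 1 - a / (n + μ) := by
      rw [sub_nonneg, div_le_one hs]
      linarith [(n.cast_nonneg : (0 : ℝ) ≤ n)]
    calc u (n + 1) ≤ (1 - a / (n + μ)) * u n + b / (n + μ) ^ 2 := hu n
      _ ≤ (1 - a / (n + μ)) * (χ / (n + μ)) + b / (n + μ) ^ 2 := by gcongr
      _ ≤ χ / ((n + μ) + 1) := contraction_step_le hs hχ hb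
      _ = χ / ((n + 1 : ℕ) + μ) := by push_cast; ring_nf

theorem sequence_contraction_general (ρ lam μ η : ℝ) (hρ : 0 < ρ) (hlam : 1 / ρ < lam)
    (hμ : lam * ρ ≤ μ) (hη : 0 ≤ η)
    (Om ηh : ℕ → ℝ)
    (hηhη : ∀ t, ηh t ≤ η)
    (hrec : ∀ t : ℕ,
      Om (t + 1) ≤ (1 - ρ * (lam / ((t : ℝ) + μ))) * Om t +
        (lam / ((t : ℝ) + μ)) ^ 2 * ηh t) :
    ∀ t : ℕ, Om t ≤ max (lam ^ 2 * η / (lam * ρ - 1)) (μ * Om 0) / ((t : ℝ) + μ) := by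
  have hlr : 0 < lam * ρ - 1 := by
    rw [div_lt_iff₀ hρ] at hlam
    linarith
  have hnoise : lam ^ 2 * η ≤ (lam * ρ - 1) * max (lam ^ 2 * η / (lam * ρ - 1)) (μ * Om 0) :=
    (div_le_iff₀' hlr).mp (le_max_left _ _)
  refine le_div_add_of_contraction hμ (by linarith) ?_ hnoise (le_max_right _ _) fun t => ?_
  · exact (div_nonneg (by positivity) hlr.le).trans (le_max_left _ _)
  · calc Om (t + 1) ≤ (1 - ρ * (lam / (t + μ))) * Om t + (lam / (t + μ)) ^ 2 * ηh t := hrec t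
      _ ≤ (1 - lam * ρ / (t + μ)) * Om t + lam ^ 2 * η / (t + μ) ^ 2 := by
        rw [div_pow, div_mul_eq_mul_div, mul_div_assoc', mul_comm ρ lam]
        gcongr
        exact hηhη t

/-- Sequence-level contraction: if `Ω(t+1) ≤ (1 - ρτ(t))Ω(t) + τ(t)²η̂(t)` with
`τ(t) = lam/(t+μ)`, then `Ω(t) ≤ χ/(t+μ)` where
`χ = max (lam²η/(lam·ρ - 1)) (μ·Ω(0))`. -/
theorem sequence_contraction (ρ lam μ η : ℝ) (hρ : 0 < ρ) (hlam : 1 / ρ < lam)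
    (hμ : lam * ρ ≤ μ) (hη : 0 ≤ η)
    (Om ηh : ℕ → ℝ) (hOm : ∀ t, 0 ≤ Om t)
    (hηh0 : ∀ t, 0 ≤ ηh t) (hηhη : ∀ t, ηh t ≤ η)
    (hrec : ∀ t : ℕ,
      Om (t + 1) ≤ (1 - ρ * (lam / ((t : ℝ) + μ))) * Om t +
        (lam / ((t : ℝ) + μ)) ^ 2 * ηh t) :
    ∀ t : ℕ, Om t ≤ max (lam ^ 2 * η / (lam * ρ - 1)) (μ * Om 0) / ((t : ℝ) + μ) :=
  sequence_contraction_general ρ lam μ η hρ hlam hμ hη Om ηh hηhη hrec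
end

section
/- Let ρ > 0 and θ ≥ ρ, let η ≥ 0, and let Ω : ℕ → ℝ and η̂ : ℕ → ℝ be sequences with Ω(t) ≥ 0 and 0 ≤ η̂(t) ≤ η for all t. Suppose that for all t ≥ 0, with τ(t) = 2/(ρt + 2θ): Ω(t+1) ≤ (1 − ρ·τ(t))·Ω(t) + τ(t)²·η̂(t). Then for every T ≥ 0: (θ/2)·Ω(T) ≤ (θ/(ρT + 2θ)) · ( 2η/ρ + θ·Ω(0) ). -/
/-!
With `a_t = ρ t + 2θ` and `τ(t) = 2 / a_t`, one shows `Ω(t) ≤ v / a_t` by induction, where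
`v = 4η/ρ + 2θ Ω(0)`. In the inductive step the contraction factor `1 - ρτ(t) = (a_t - 2ρ)/a_t`
and the noise term `4η/a_t² ≤ ρv/a_t²` combine to `(a_t - ρ) v / a_t²`, which is at most
`v / (a_t + ρ) = v / a_{t+1}` because `(a_t - ρ)(a_t + ρ) ≤ a_t²`.
-/

theorem le_div_add_of_recursion_step {ρ a v c x y : ℝ} (hρ : 0 < ρ) (ha : 2 * ρ ≤ a)
    (hv : 0 ≤ v) (hc : 4 * c ≤ ρ * v) (hx : x ≤ v / a)
    (hy : y ≤ (1 - ρ * (2 / a)) * x + (2 / a) ^ 2 * c) :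
    y ≤ v / (a + ρ) := by
  have ha₀ : 0 < a := by linarith
  have hcontr : 0 ≤ 1 - ρ * (2 / a) := by
    rw [sub_nonneg, mul_div_assoc', div_le_one ha₀]
    linarith
  calc y ≤ (1 - ρ * (2 / a)) * (v / a) + (2 / a) ^ 2 * c := hy.trans (by gcongr)
    _ = ((a - 2 * ρ) * v + 4 * c) / a ^ 2 := by field_simp; ring
    _ ≤ (a - ρ) * v / a ^ 2 := div_le_div_of_nonneg_right (by linarith) (by positivity)
    _ ≤ v / (a + ρ) := by
      rw [div_le_div_iff₀ (by positivity) (by linarith)]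
      nlinarith [mul_nonneg hv (sq_nonneg ρ)]

theorem le_div_of_recursion {ρ θ v c : ℝ} {u : ℕ → ℝ} (hρ : 0 < ρ) (hθ : ρ ≤ θ) (hv : 0 ≤ v)
    (hc : 4 * c ≤ ρ * v) (h₀ : u 0 ≤ v / (2 * θ))
    (hstep : ∀ t : ℕ, u (t + 1) ≤ (1 - ρ * (2 / (ρ * (t : ℝ) + 2 * θ))) * u t +
      (2 / (ρ * (t : ℝ) + 2 * θ)) ^ 2 * c) (t : ℕ) :
    u t ≤ v / (ρ * (t : ℝ) + 2 * θ) := by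
  induction t with
  | zero => simpa using h₀
  | succ t ih =>
    have hnext : ρ * ((t + 1 : ℕ) : ℝ) + 2 * θ = ρ * t + 2 * θ + ρ := by push_cast; ring
    rw [hnext]
    refine le_div_add_of_recursion_step hρ ?_ hv hc ih (hstep t)
    nlinarith [mul_nonneg hρ.le (Nat.cast_nonneg t : (0 : ℝ) ≤ t)]

theorem sequence_optimality_gap_general (ρ θ η : ℝ) (hρ : 0 < ρ) (hθ : ρ ≤ θ) (hη : 0 ≤ η)
    (Om ηh : ℕ → ℝ) (hOm : ∀ t, 0 ≤ Om t)
    (hηhη : ∀ t, ηh t ≤ η)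
    (hrec : ∀ t : ℕ,
      Om (t + 1) ≤ (1 - ρ * (2 / (ρ * (t : ℝ) + 2 * θ))) * Om t +
        (2 / (ρ * (t : ℝ) + 2 * θ)) ^ 2 * ηh t) :
    ∀ T : ℕ, θ / 2 * Om T ≤ θ / (ρ * (T : ℝ) + 2 * θ) * (2 * η / ρ + θ * Om 0) := by
  intro T
  have hθ₀ : 0 < θ := hρ.trans_le hθ
  set v := 4 * η / ρ + 2 * θ * Om 0 with hv
  have hv₀ : 0 ≤ v := by have := hOm 0; positivity
  have hηv : 4 * η ≤ ρ * v := by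
    rw [hv, mul_add, mul_div_cancel₀ _ hρ.ne']
    exact le_add_of_nonneg_right (by have := hOm 0; positivity)
  have h₀ : Om 0 ≤ v / (2 * θ) := by
    rw [le_div_iff₀ (by positivity)]
    linarith [div_nonneg (mul_nonneg zero_le_four hη) hρ.le]
  have hstep (t : ℕ) : Om (t + 1) ≤ (1 - ρ * (2 / (ρ * (t : ℝ) + 2 * θ))) * Om t +
      (2 / (ρ * (t : ℝ) + 2 * θ)) ^ 2 * η :=
    (hrec t).trans <| by gcongr; exact hηhη t
  calc θ / 2 * Om T ≤ θ / 2 * (v / (ρ * (T : ℝ) + 2 * θ)) := by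
        gcongr
        exact le_div_of_recursion hρ hθ hv₀ hηv h₀ hstep T
    _ = θ / (ρ * (T : ℝ) + 2 * θ) * (2 * η / ρ + θ * Om 0) := by
        rw [hv]
        field_simp
        ring

/-- Sequence-level optimality-gap bound: with learning rate `τ(t) = 2/(ρt + 2θ)`, the
recursion `Ω(t+1) ≤ (1 - ρτ(t))Ω(t) + τ(t)²η̂(t)` yields
`(θ/2)Ω(T) ≤ (θ/(ρT + 2θ))(2η/ρ + θΩ(0))` for every `T`. -/
theorem sequence_optimality_gap (ρ θ η : ℝ) (hρ : 0 < ρ) (hθ : ρ ≤ θ) (hη : 0 ≤ η)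
    (Om ηh : ℕ → ℝ) (hOm : ∀ t, 0 ≤ Om t)
    (hηh0 : ∀ t, 0 ≤ ηh t) (hηhη : ∀ t, ηh t ≤ η)
    (hrec : ∀ t : ℕ,
      Om (t + 1) ≤ (1 - ρ * (2 / (ρ * (t : ℝ) + 2 * θ))) * Om t +
        (2 / (ρ * (t : ℝ) + 2 * θ)) ^ 2 * ηh t) :
    ∀ T : ℕ, θ / 2 * Om T ≤ θ / (ρ * (T : ℝ) + 2 * θ) * (2 * η / ρ + θ * Om 0) :=
  sequence_optimality_gap_general ρ θ η hρ hθ hη Om ηh hOm hηhη hrec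
end

section
/- Let N be a positive integer and p : {0,1,…,N−1} → ℝ be strictly positive and antitone (i.e., p is sorted in descending order: i ≤ j implies p(j) ≤ p(i)). Let ĉ > 0 and C > 0. Call a nonempty subset S ⊆ {0,…,N−1} feasible if (i) p(n) ≤ ĉ for all n ∈ S, and (ii) |S| · max_{n∈S} p(n) ≤ C. Then for every feasible nonempty set S, letting j = min S and K = min( N − j, ⌊C / p(j)⌋ ), the interval set S' = { n : j ≤ n < j + K } is feasible, nonempty, and satisfies Σ_{n∈S'} p(n) ≥ Σ_{n∈S} p(n). Consequently, the maximum of Σ_{n∈S} p(n) over feasible sets is attained by an interval of consecutive indices of this form. -/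
lemma strictMono_add_le {m N : ℕ} (f : Fin m → Fin N) (hf : StrictMono f) (hm : 0 < m)
    (i : Fin m) : (f ⟨0, hm⟩ : ℕ) + (i : ℕ) ≤ (f i : ℕ) := by
  obtain ⟨v, hv⟩ := i
  induction v with
  | zero => simp
  | succ k ih =>
    have hk : k < m := Nat.lt_of_succ_lt hv
    have h1 : f ⟨k, hk⟩ < f ⟨k + 1, hv⟩ := hf (by simp [Fin.lt_def])
    have h2 := ih hk
    rw [Fin.lt_def] at h1
    simp only [Fin.val_mk] at h1 h2 ⊢
    omega

/-- Structure of the optimal solution of the high-dimensional scheduling problem P2: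
for any feasible set `S` of uploaders, the interval of consecutive indices starting at
`j = min S` of length `K = min (N - j) ⌊C / p j⌋` is feasible and has at least as large
an objective value `Σ p`. -/
theorem interval_solution_optimal (N : ℕ) (hN : 0 < N) (p : Fin N → ℝ)
    (hp : ∀ n, 0 < p n) (hanti : ∀ i j : Fin N, i ≤ j → p j ≤ p i)
    (chat C : ℝ) (hchat : 0 < chat) (hC : 0 < C)
    (S : Finset (Fin N)) (hS : S.Nonempty)
    (hfeas1 : ∀ n ∈ S, p n ≤ chat)
    (hfeas2 : (S.card : ℝ) * S.sup' hS p ≤ C) :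
    let j := S.min' hS
    let K := min (N - (j : ℕ)) (Nat.floor (C / p j))
    let S' : Finset (Fin N) :=
      Finset.univ.filter (fun n : Fin N => (j : ℕ) ≤ (n : ℕ) ∧ (n : ℕ) < (j : ℕ) + K)
    ∃ hne : S'.Nonempty,
      (∀ n ∈ S', p n ≤ chat) ∧
      (S'.card : ℝ) * S'.sup' hne p ≤ C ∧
      ∑ n ∈ S, p n ≤ ∑ n ∈ S', p n := by
  intro j K S'
  have hj : j ∈ S := S.min'_mem hS
  have hpj : 0 < p j := hp j
  have hsup : S.sup' hS p = p j := by
    apply le_antisymm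
    · exact Finset.sup'_le hS p fun n hn => hanti j n (S.min'_le n hn)
    · exact Finset.le_sup' p hj
  -- card bounds
  have hcard1 : S.card ≤ N - (j : ℕ) := by
    have hsub : S ⊆ Finset.univ.filter (fun n : Fin N => (j : ℕ) ≤ (n : ℕ)) := by
      intro n hn
      simp only [Finset.mem_filter, Finset.mem_univ, true_and]
      exact S.min'_le n hn
    calc S.card ≤ _ := Finset.card_le_card hsub
      _ ≤ N - (j : ℕ) := by
        have : Finset.image Fin.val (Finset.univ.filter (fun n : Fin N => (j : ℕ) ≤ (n : ℕ)))
            ⊆ Finset.Ico (j : ℕ) N := by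
          intro m hm
          simp only [Finset.mem_image, Finset.mem_filter, Finset.mem_univ, true_and] at hm
          obtain ⟨n, hn, rfl⟩ := hm
          exact Finset.mem_Ico.2 ⟨hn, n.isLt⟩
        have := Finset.card_le_card this
        rwa [Finset.card_image_of_injective _ Fin.val_injective, Nat.card_Ico] at this
  have hcard2 : S.card ≤ Nat.floor (C / p j) := by
    apply Nat.le_floor
    rw [le_div_iff₀ hpj]
    rwa [hsup] at hfeas2
  have hcardK : S.card ≤ K := le_min hcard1 hcard2
  have hKpos : 0 < K := lt_of_lt_of_le (Finset.card_pos.2 hS) hcardK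
  have hjK : (j : ℕ) + K ≤ N := by
    have : K ≤ N - (j : ℕ) := min_le_left _ _
    omega
  -- membership in S'
  have hmemS' : ∀ n : Fin N, n ∈ S' ↔ (j : ℕ) ≤ (n : ℕ) ∧ (n : ℕ) < (j : ℕ) + K := by
    intro n; simp [S']
  have hjS' : j ∈ S' := (hmemS' j).2 ⟨le_refl _, by omega⟩
  have hne : S'.Nonempty := ⟨j, hjS'⟩
  refine ⟨hne, ?_, ?_, ?_⟩
  · intro n hn
    have hn' := (hmemS' n).1 hn
    exact le_trans (hanti j n hn'.1) (hfeas1 j hj)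
  · -- card S' = K and sup' = p j
    have hcardS' : S'.card = K := by
      have himg : Finset.image Fin.val S' = Finset.Ico (j : ℕ) ((j : ℕ) + K) := by
        ext m
        simp only [Finset.mem_image, Finset.mem_Ico]
        constructor
        · rintro ⟨n, hn, rfl⟩; exact (hmemS' n).1 hn
        · rintro ⟨h1, h2⟩
          exact ⟨⟨m, by omega⟩, (hmemS' _).2 ⟨h1, h2⟩, rfl⟩
      have := congrArg Finset.card himg
      rwa [Finset.card_image_of_injective _ Fin.val_injective, Nat.card_Ico,
        Nat.add_sub_cancel_left] at this
    have hsupS' : S'.sup' hne p = p j := by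
      apply le_antisymm
      · exact Finset.sup'_le hne p fun n hn => hanti j n ((hmemS' n).1 hn).1
      · exact Finset.le_sup' p hjS'
    rw [hcardS', hsupS']
    have hKfloor : (K : ℝ) ≤ C / p j := by
      have : K ≤ Nat.floor (C / p j) := min_le_right _ _
      calc (K : ℝ) ≤ (Nat.floor (C / p j) : ℝ) := by exact_mod_cast this
        _ ≤ C / p j := Nat.floor_le (by positivity)
    calc (K : ℝ) * p j ≤ (C / p j) * p j := by
          exact mul_le_mul_of_nonneg_right hKfloor hpj.le
      _ = C := div_mul_cancel₀ C hpj.ne'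
  · -- sum comparison
    set m := S.card with hm
    have hm0 : 0 < m := Finset.card_pos.2 hS
    set f := S.orderEmbOfFin (rfl : S.card = m) with hf
    have himgf : Finset.image f Finset.univ = S := by
      apply Finset.coe_injective
      rw [Finset.coe_image, Finset.coe_univ, Set.image_univ]
      exact Finset.range_orderEmbOfFin S rfl
    have hsumf : ∑ n ∈ S, p n = ∑ i : Fin m, p (f i) := by
      refine (Finset.sum_congr himgf.symm fun _ _ => rfl).trans ?_
      exact Finset.sum_image (fun a _ b _ h => f.injective h)
    -- define g
    have hgi : ∀ i : Fin m, (j : ℕ) + (i : ℕ) < N := fun i => by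
      have : (i : ℕ) < K := lt_of_lt_of_le i.isLt hcardK
      omega
    set g : Fin m → Fin N := fun i => ⟨(j : ℕ) + (i : ℕ), hgi i⟩ with hg
    have hgf : ∀ i : Fin m, p (f i) ≤ p (g i) := by
      intro i
      apply hanti
      rw [Fin.le_def]
      show (j : ℕ) + (i : ℕ) ≤ (f i : ℕ)
      have h0 : f ⟨0, hm0⟩ = j := Finset.orderEmbOfFin_zero rfl hm0
      have := strictMono_add_le f f.strictMono hm0 i
      omega
    have hginj : Function.Injective g := by
      intro a b hab
      have : (j : ℕ) + (a : ℕ) = (j : ℕ) + (b : ℕ) := congrArg Fin.val hab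
      exact Fin.ext (by omega)
    have hgsub : Finset.image g Finset.univ ⊆ S' := by
      intro n hn
      simp only [Finset.mem_image, Finset.mem_univ, true_and] at hn
      obtain ⟨i, rfl⟩ := hn
      refine (hmemS' _).2 ⟨by simp [hg], ?_⟩
      show (j : ℕ) + (i : ℕ) < (j : ℕ) + K
      have : (i : ℕ) < K := lt_of_lt_of_le i.isLt hcardK
      omega
    calc ∑ n ∈ S, p n = ∑ i : Fin m, p (f i) := hsumf
      _ ≤ ∑ i : Fin m, p (g i) := Finset.sum_le_sum fun i _ => hgf i
      _ = ∑ n ∈ Finset.image g Finset.univ, p n :=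
          (Finset.sum_image (fun a _ b _ h => hginj h)).symm
      _ ≤ ∑ n ∈ S', p n :=
          Finset.sum_le_sum_of_subset_of_nonneg hgsub (fun n _ _ => (hp n).le)
end
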